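/- arXiv:1911.12737 — 2 statements merged into one kernel-verified Lean document; each statement's English description precedes it below -/
import Mathlib

section
/- Preservation of the LL(1) property under derivatives: for every LL(1) syntax s : Syntax A (i.e. ¬HasConflict s) and every token t with kind t ∈ First s, the derivative δ t s is again LL(1), i.e. ¬HasConflict (δ t s). -/
set_option autoImplicit false

/-- Context-free syntaxes (value-aware context-free expressions). -/
inductive Syn (Token Kind : Type) (Var : Type → Type) : Type → Type 1 where
  | elem (k : Kind) : Syn Token Kind Var Token
  | fail {A : Type} : Syn Token Kind Var A
  | eps {A : Type} (v : A) : Syn Token Kind Var A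
  | disj {A : Type} (s₁ s₂ : Syn Token Kind Var A) : Syn Token Kind Var A
  | seqn {A B : Type} (s₁ : Syn Token Kind Var A) (s₂ : Syn Token Kind Var B) :
      Syn Token Kind Var (A × B)
  | map {A B : Type} (f : A → B) (s : Syn Token Kind Var A) : Syn Token Kind Var B
  | var {A : Type} (x : Var A) : Syn Token Kind Var A

section

variable {Token Kind : Type} {Var : Type → Type}
variable (kd : Token → Kind) (env : ∀ A : Type, Var A → Syn Token Kind Var A)

/-- Semantics of syntaxes. -/
inductive Matches : ∀ {A : Type}, Syn Token Kind Var A → List Token → A → Prop where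
  | elem {k : Kind} {t : Token} (h : kd t = k) : Matches (Syn.elem k) [t] t
  | eps {A : Type} (v : A) : Matches (Syn.eps v) [] v
  | disjL {A : Type} {s₁ s₂ : Syn Token Kind Var A} {ts : List Token} {v : A} :
      Matches s₁ ts v → Matches (Syn.disj s₁ s₂) ts v
  | disjR {A : Type} {s₁ s₂ : Syn Token Kind Var A} {ts : List Token} {v : A} :
      Matches s₂ ts v → Matches (Syn.disj s₁ s₂) ts v
  | seqn {A B : Type} {s₁ : Syn Token Kind Var A} {s₂ : Syn Token Kind Var B}
      {ts₁ ts₂ : List Token} {v₁ : A} {v₂ : B} :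
      Matches s₁ ts₁ v₁ → Matches s₂ ts₂ v₂ →
      Matches (Syn.seqn s₁ s₂) (ts₁ ++ ts₂) (v₁, v₂)
  | map {A B : Type} (f : A → B) {s : Syn Token Kind Var A} {ts : List Token} {v : A} :
      Matches s ts v → Matches (Syn.map f s) ts (f v)
  | var {A : Type} (x : Var A) {ts : List Token} {v : A} :
      Matches (env A x) ts v → Matches (Syn.var x) ts v

/-- Productivity. -/
inductive Productive : ∀ {A : Type}, Syn Token Kind Var A → Prop where
  | eps {A : Type} (v : A) : Productive (Syn.eps v)
  | elem (k : Kind) : Productive (Syn.elem k)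
  | disjL {A : Type} {s₁ s₂ : Syn Token Kind Var A} :
      Productive s₁ → Productive (Syn.disj s₁ s₂)
  | disjR {A : Type} {s₁ s₂ : Syn Token Kind Var A} :
      Productive s₂ → Productive (Syn.disj s₁ s₂)
  | seqn {A B : Type} {s₁ : Syn Token Kind Var A} {s₂ : Syn Token Kind Var B} :
      Productive s₁ → Productive s₂ → Productive (Syn.seqn s₁ s₂)
  | map {A B : Type} (f : A → B) {s : Syn Token Kind Var A} :
      Productive s → Productive (Syn.map f s)
  | var {A : Type} (x : Var A) : Productive (env A x) → Productive (Syn.var x)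

/-- Nullability, with associated value. -/
inductive Nullable : ∀ {A : Type}, Syn Token Kind Var A → A → Prop where
  | eps {A : Type} (v : A) : Nullable (Syn.eps v) v
  | disjL {A : Type} {s₁ s₂ : Syn Token Kind Var A} {v : A} :
      Nullable s₁ v → Nullable (Syn.disj s₁ s₂) v
  | disjR {A : Type} {s₁ s₂ : Syn Token Kind Var A} {v : A} :
      Nullable s₂ v → Nullable (Syn.disj s₁ s₂) v
  | seqn {A B : Type} {s₁ : Syn Token Kind Var A} {s₂ : Syn Token Kind Var B} {v₁ : A} {v₂ : B} :
      Nullable s₁ v₁ → Nullable s₂ v₂ → Nullable (Syn.seqn s₁ s₂) (v₁, v₂)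
  | map {A B : Type} (f : A → B) {s : Syn Token Kind Var A} {v : A} :
      Nullable s v → Nullable (Syn.map f s) (f v)
  | var {A : Type} (x : Var A) {v : A} : Nullable (env A x) v → Nullable (Syn.var x) v

/-- First sets: `InFirst env k s` means `k ∈ First s`. -/
inductive InFirst : ∀ {A : Type}, Kind → Syn Token Kind Var A → Prop where
  | elem (k : Kind) : InFirst k (Syn.elem k)
  | disjL {A : Type} {k : Kind} {s₁ s₂ : Syn Token Kind Var A} :
      InFirst k s₁ → InFirst k (Syn.disj s₁ s₂)
  | disjR {A : Type} {k : Kind} {s₁ s₂ : Syn Token Kind Var A} :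
      InFirst k s₂ → InFirst k (Syn.disj s₁ s₂)
  | seqnL {A B : Type} {k : Kind} {s₁ : Syn Token Kind Var A} {s₂ : Syn Token Kind Var B} :
      InFirst k s₁ → Productive env s₂ → InFirst k (Syn.seqn s₁ s₂)
  | seqnR {A B : Type} {k : Kind} {s₁ : Syn Token Kind Var A} {s₂ : Syn Token Kind Var B}
      {v : A} : Nullable env s₁ v → InFirst k s₂ → InFirst k (Syn.seqn s₁ s₂)
  | map {A B : Type} {k : Kind} (f : A → B) {s : Syn Token Kind Var A} :
      InFirst k s → InFirst k (Syn.map f s)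
  | var {A : Type} {k : Kind} (x : Var A) : InFirst k (env A x) → InFirst k (Syn.var x)

/-- Should-not-follow sets: `InSNF env k s` means `k ∈ ShouldNotFollow s`. -/
inductive InSNF : ∀ {A : Type}, Kind → Syn Token Kind Var A → Prop where
  | disjL {A : Type} {k : Kind} {s₁ s₂ : Syn Token Kind Var A} :
      InSNF k s₁ → InSNF k (Syn.disj s₁ s₂)
  | disjR {A : Type} {k : Kind} {s₁ s₂ : Syn Token Kind Var A} :
      InSNF k s₂ → InSNF k (Syn.disj s₁ s₂)
  | disjFN {A : Type} {k : Kind} {s₁ s₂ : Syn Token Kind Var A} {v : A} :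
      InFirst env k s₁ → Nullable env s₂ v → InSNF k (Syn.disj s₁ s₂)
  | disjNF {A : Type} {k : Kind} {s₁ s₂ : Syn Token Kind Var A} {v : A} :
      Nullable env s₁ v → InFirst env k s₂ → InSNF k (Syn.disj s₁ s₂)
  | seqnL {A B : Type} {k : Kind} {s₁ : Syn Token Kind Var A} {s₂ : Syn Token Kind Var B}
      {v : B} : InSNF k s₁ → Nullable env s₂ v → InSNF k (Syn.seqn s₁ s₂)
  | seqnR {A B : Type} {k : Kind} {s₁ : Syn Token Kind Var A} {s₂ : Syn Token Kind Var B} :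
      Productive env s₁ → InSNF k s₂ → InSNF k (Syn.seqn s₁ s₂)
  | map {A B : Type} {k : Kind} (f : A → B) {s : Syn Token Kind Var A} :
      InSNF k s → InSNF k (Syn.map f s)
  | var {A : Type} {k : Kind} (x : Var A) : InSNF k (env A x) → InSNF k (Syn.var x)

/-- LL(1) conflicts. A syntax `s` is LL(1) iff `¬ HasConflict env s`. -/
inductive HasConflict : ∀ {A : Type}, Syn Token Kind Var A → Prop where
  | disjNN {A : Type} {s₁ s₂ : Syn Token Kind Var A} {v₁ v₂ : A} :
      Nullable env s₁ v₁ → Nullable env s₂ v₂ → HasConflict (Syn.disj s₁ s₂)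
  | disjFF {A : Type} {s₁ s₂ : Syn Token Kind Var A} {k : Kind} :
      InFirst env k s₁ → InFirst env k s₂ → HasConflict (Syn.disj s₁ s₂)
  | disjL {A : Type} {s₁ s₂ : Syn Token Kind Var A} :
      HasConflict s₁ → HasConflict (Syn.disj s₁ s₂)
  | disjR {A : Type} {s₁ s₂ : Syn Token Kind Var A} :
      HasConflict s₂ → HasConflict (Syn.disj s₁ s₂)
  | seqnSF {A B : Type} {s₁ : Syn Token Kind Var A} {s₂ : Syn Token Kind Var B} {k : Kind} :
      InSNF env k s₁ → InFirst env k s₂ → HasConflict (Syn.seqn s₁ s₂)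
  | seqnL {A B : Type} {s₁ : Syn Token Kind Var A} {s₂ : Syn Token Kind Var B} :
      HasConflict s₁ → HasConflict (Syn.seqn s₁ s₂)
  | seqnR {A B : Type} {s₁ : Syn Token Kind Var A} {s₂ : Syn Token Kind Var B} :
      HasConflict s₂ → HasConflict (Syn.seqn s₁ s₂)
  | map {A B : Type} (f : A → B) {s : Syn Token Kind Var A} :
      HasConflict s → HasConflict (Syn.map f s)
  | var {A : Type} (x : Var A) : HasConflict (env A x) → HasConflict (Syn.var x)

end

/-- Layers of a context, with above type `A` and below type `B`. -/
inductive Layer (Token Kind : Type) (Var : Type → Type) : Type → Type → Type 1 where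
  | apply {A B : Type} (f : A → B) : Layer Token Kind Var A B
  | prepend {A C : Type} (v : C) : Layer Token Kind Var A (C × A)
  | followBy {A C : Type} (s : Syn Token Kind Var C) : Layer Token Kind Var A (A × C)

/-- Type-aligned contexts (stacks of layers). -/
inductive Ctx (Token Kind : Type) (Var : Type → Type) : Type → Type → Type 1 where
  | nil {A : Type} : Ctx Token Kind Var A A
  | cons {A B C : Type} (l : Layer Token Kind Var A B) (c : Ctx Token Kind Var B C) :
      Ctx Token Kind Var A C

section

variable {Token Kind : Type} {Var : Type → Type}

def Ctx.isNil : ∀ {A B : Type}, Ctx Token Kind Var A B → Bool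
  | _, _, Ctx.nil => true
  | _, _, Ctx.cons _ _ => false

/-- Unfocusing a focused syntax. -/
def unfocus : ∀ {A B : Type}, Syn Token Kind Var A → Ctx Token Kind Var A B →
    Syn Token Kind Var B
  | _, _, s, Ctx.nil => s
  | _, _, s, Ctx.cons (Layer.apply f) c => unfocus (Syn.map f s) c
  | _, _, s, Ctx.cons (Layer.prepend v) c => unfocus (Syn.seqn (Syn.eps v) s) c
  | _, _, s, Ctx.cons (Layer.followBy s') c => unfocus (Syn.seqn s s') c

/-- Focused syntaxes with below type `B`. -/
def Focused (Token Kind : Type) (Var : Type → Type) (B : Type) : Type 1 :=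
  (A : Type) × Syn Token Kind Var A × Ctx Token Kind Var A B

def unfocusF {B : Type} (fs : Focused Token Kind Var B) : Syn Token Kind Var B :=
  unfocus fs.2.1 fs.2.2

def focusF {A : Type} (s : Syn Token Kind Var A) : Focused Token Kind Var A :=
  ⟨A, s, Ctx.nil⟩

/-- Plugging a value into a context. -/
def plug : ∀ {A B : Type}, A → Ctx Token Kind Var A B → Focused Token Kind Var B
  | A, _, v, Ctx.nil => ⟨A, Syn.eps v, Ctx.nil⟩
  | _, _, v, Ctx.cons (Layer.apply f) c => plug (f v) c
  | _, _, v, Ctx.cons (Layer.prepend v') c => plug (v', v) c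
  | _, _, v, Ctx.cons (Layer.followBy s) c => ⟨_, s, Ctx.cons (Layer.prepend v) c⟩

end

/-!
A derivative only ever replaces a subterm by a derivative of it, or a nullable left operand of a
sequence by `eps` of its value, so by induction on `kd t ∈ First s` it suffices to carry the
invariant "`δ t s` is LL(1) and `ShouldNotFollow (δ t s) ⊆ ShouldNotFollow s`". The only step that
is not local is the sequence whose left operand keeps the token: there `First s₂` is disjoint from
`ShouldNotFollow s₁`, hence from `ShouldNotFollow (δ t s₁)`. The choice between the two sequence
cases is consistent because a kind in the first set of a nullable LL(1) syntax should not follow it.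
-/

section

variable {Token Kind : Type} {Var : Type → Type}
variable {kd : Token → Kind} {env : ∀ A : Type, Var A → Syn Token Kind Var A}

theorem Nullable.productive {A : Type} {s : Syn Token Kind Var A} {v : A}
    (h : Nullable env s v) : Productive env s := by
  induction h with
  | eps v => exact .eps v
  | disjL _ ih => exact .disjL ih
  | disjR _ ih => exact .disjR ih
  | seqn _ _ ih₁ ih₂ => exact .seqn ih₁ ih₂
  | map f _ ih => exact .map f ih
  | var x _ ih => exact .var x ih

theorem InFirst.productive {A : Type} {k : Kind} {s : Syn Token Kind Var A}
    (h : InFirst env k s) : Productive env s := by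
  induction h with
  | elem k => exact .elem k
  | disjL _ ih => exact .disjL ih
  | disjR _ ih => exact .disjR ih
  | seqnL _ hp ih => exact .seqn ih hp
  | seqnR hn _ ih => exact .seqn hn.productive ih
  | map f _ ih => exact .map f ih
  | var x _ ih => exact .var x ih

variable (env)

/- `cases` cannot invert a derivation at `Syn.seqn s₁ s₂`, since that needs `A × B = A' × B'` to
imply `A = A'` and `B = B'`; instead `cases` runs at an arbitrary syntax and these motives, which
compute on `Syn.seqn`, carry the result back. -/

def SeqnNullableInv : ∀ {C : Type}, Syn Token Kind Var C → C → Prop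
  | _, Syn.seqn s₁ s₂, v => Nullable env s₁ v.1 ∧ Nullable env s₂ v.2
  | _, _, _ => True

def SeqnConflictInv : ∀ {C : Type}, Syn Token Kind Var C → Prop
  | _, Syn.seqn s₁ s₂ =>
      (∃ k, InSNF env k s₁ ∧ InFirst env k s₂) ∨ HasConflict env s₁ ∨ HasConflict env s₂
  | _, _ => True

def SeqnSNFInv (k : Kind) : ∀ {C : Type}, Syn Token Kind Var C → Prop
  | _, Syn.seqn s₁ s₂ =>
      (∃ v, InSNF env k s₁ ∧ Nullable env s₂ v) ∨ (Productive env s₁ ∧ InSNF env k s₂)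
  | _, _ => True

variable {env}

section Seqn

variable {A A' B : Type} {s₁ : Syn Token Kind Var A} {s₂ : Syn Token Kind Var B}

theorem Nullable.of_seqn {v : A × B} (h : Nullable env (Syn.seqn s₁ s₂) v) :
    Nullable env s₁ v.1 ∧ Nullable env s₂ v.2 := by
  have inv {C : Type} {s : Syn Token Kind Var C} {w : C} (h : Nullable env s w) :
      SeqnNullableInv env s w := by
    cases h with
    | seqn h₁ h₂ => exact ⟨h₁, h₂⟩
    | _ => trivial
  exact inv h

theorem HasConflict.of_seqn (h : HasConflict env (Syn.seqn s₁ s₂)) :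
    (∃ k, InSNF env k s₁ ∧ InFirst env k s₂) ∨ HasConflict env s₁ ∨ HasConflict env s₂ := by
  have inv {C : Type} {s : Syn Token Kind Var C} (h : HasConflict env s) :
      SeqnConflictInv env s := by
    cases h with
    | seqnSF h₁ h₂ => exact .inl ⟨_, h₁, h₂⟩
    | seqnL h₁ => exact .inr (.inl h₁)
    | seqnR h₂ => exact .inr (.inr h₂)
    | _ => trivial
  exact inv h

theorem InSNF.of_seqn {k : Kind} (h : InSNF env k (Syn.seqn s₁ s₂)) :
    (∃ v, InSNF env k s₁ ∧ Nullable env s₂ v) ∨ (Productive env s₁ ∧ InSNF env k s₂) := by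
  have inv {C : Type} {s : Syn Token Kind Var C} (h : InSNF env k s) : SeqnSNFInv env k s := by
    cases h with
    | seqnL h₁ h₂ => exact .inl ⟨_, h₁, h₂⟩
    | seqnR h₁ h₂ => exact .inr ⟨h₁, h₂⟩
    | _ => trivial
  exact inv h

theorem not_hasConflict_seqn_of_left {s₁' : Syn Token Kind Var A}
    (h : ¬ HasConflict env (Syn.seqn s₁ s₂)) (h₁' : ¬ HasConflict env s₁')
    (hsub : ∀ k, InSNF env k s₁' → InSNF env k s₁) :
    ¬ HasConflict env (Syn.seqn s₁' s₂) := by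
  intro hc
  rcases hc.of_seqn with ⟨k, hk₁, hk₂⟩ | hc₁ | hc₂
  · exact h (.seqnSF (hsub k hk₁) hk₂)
  · exact h₁' hc₁
  · exact h (.seqnR hc₂)

theorem inSNF_seqn_of_left {s₁' : Syn Token Kind Var A} (hp : Productive env s₁)
    (hsub : ∀ k, InSNF env k s₁' → InSNF env k s₁) (k : Kind)
    (h : InSNF env k (Syn.seqn s₁' s₂)) : InSNF env k (Syn.seqn s₁ s₂) := by
  rcases h.of_seqn with ⟨_, hk₁, hn₂⟩ | ⟨_, hk₂⟩
  · exact .seqnL (hsub k hk₁) hn₂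
  · exact .seqnR hp hk₂

theorem not_hasConflict_seqn_eps {v : A'} (h : ¬ HasConflict env s₂) :
    ¬ HasConflict env (Syn.seqn (Syn.eps v) s₂) := by
  intro hc
  rcases hc.of_seqn with ⟨_, hk, _⟩ | hc₁ | hc₂
  · cases hk
  · cases hc₁
  · exact h hc₂

theorem inSNF_seqn_of_eps {v : A} {s₂' : Syn Token Kind Var B} (hp : Productive env s₁)
    (hsub : ∀ k, InSNF env k s₂' → InSNF env k s₂) (k : Kind)
    (h : InSNF env k (Syn.seqn (Syn.eps v) s₂')) : InSNF env k (Syn.seqn s₁ s₂) := by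
  rcases h.of_seqn with ⟨_, hk, _⟩ | ⟨_, hk₂⟩
  · cases hk
  · exact .seqnR hp (hsub k hk₂)

end Seqn

theorem InFirst.inSNF_of_nullable {A : Type} {k : Kind} {s : Syn Token Kind Var A} {v : A}
    (hf : InFirst env k s) (hn : Nullable env s v) (hs : ¬ HasConflict env s) :
    InSNF env k s := by
  induction hf with
  | elem k => cases hn
  | disjL h ih =>
    cases hn with
    | disjL hn₁ => exact .disjL (ih hn₁ fun hc => hs (.disjL hc))
    | disjR hn₂ => exact .disjFN h hn₂
  | disjR h ih =>
    cases hn with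
    | disjL hn₁ => exact .disjNF hn₁ h
    | disjR hn₂ => exact .disjR (ih hn₂ fun hc => hs (.disjR hc))
  | seqnL _ _ ih =>
    obtain ⟨hn₁, hn₂⟩ := hn.of_seqn
    exact .seqnL (ih hn₁ fun hc => hs (.seqnL hc)) hn₂
  | seqnR _ _ ih =>
    obtain ⟨hn₁, hn₂⟩ := hn.of_seqn
    exact .seqnR hn₁.productive (ih hn₂ fun hc => hs (.seqnR hc))
  | map f _ ih =>
    cases hn with
    | map _ hn' => exact .map f (ih hn' fun hc => hs (.map f hc))
  | var x _ ih =>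
    cases hn with
    | var _ hn' => exact .var x (ih hn' fun hc => hs (.var x hc))

variable (kd env)

structure IsDerivative (nullOpt : ∀ {A : Type}, Syn Token Kind Var A → Option A)
    (delta : ∀ {A : Type}, Token → Syn Token Kind Var A → Syn Token Kind Var A) : Prop where
  nullOpt_eq_some_iff : ∀ {A : Type} (s : Syn Token Kind Var A), ¬ HasConflict env s →
    ∀ v : A, nullOpt s = some v ↔ Nullable env s v
  elem : ∀ (t : Token) (k : Kind),
    ¬ HasConflict env (Syn.elem k : Syn Token Kind Var Token) →
    InFirst env (kd t) (Syn.elem k : Syn Token Kind Var Token) →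
    delta t (Syn.elem k) = Syn.eps t
  disj_left : ∀ {A : Type} (t : Token) (s₁ s₂ : Syn Token Kind Var A),
    ¬ HasConflict env (Syn.disj s₁ s₂) → InFirst env (kd t) (Syn.disj s₁ s₂) →
    InFirst env (kd t) s₁ → delta t (Syn.disj s₁ s₂) = delta t s₁
  disj_right : ∀ {A : Type} (t : Token) (s₁ s₂ : Syn Token Kind Var A),
    ¬ HasConflict env (Syn.disj s₁ s₂) → InFirst env (kd t) (Syn.disj s₁ s₂) →
    ¬ InFirst env (kd t) s₁ → delta t (Syn.disj s₁ s₂) = delta t s₂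
  seqn_right : ∀ {A B : Type} (t : Token) (s₁ : Syn Token Kind Var A)
    (s₂ : Syn Token Kind Var B) (v : A),
    ¬ HasConflict env (Syn.seqn s₁ s₂) → InFirst env (kd t) (Syn.seqn s₁ s₂) →
    nullOpt s₁ = some v → InFirst env (kd t) s₂ →
    delta t (Syn.seqn s₁ s₂) = Syn.seqn (Syn.eps v) (delta t s₂)
  seqn_left : ∀ {A B : Type} (t : Token) (s₁ : Syn Token Kind Var A)
    (s₂ : Syn Token Kind Var B),
    ¬ HasConflict env (Syn.seqn s₁ s₂) → InFirst env (kd t) (Syn.seqn s₁ s₂) →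
    (∀ v : A, nullOpt s₁ = some v → ¬ InFirst env (kd t) s₂) →
    delta t (Syn.seqn s₁ s₂) = Syn.seqn (delta t s₁) s₂
  map : ∀ {A B : Type} (t : Token) (f : A → B) (s : Syn Token Kind Var A),
    ¬ HasConflict env (Syn.map f s) → InFirst env (kd t) (Syn.map f s) →
    delta t (Syn.map f s) = Syn.map f (delta t s)
  var : ∀ {A : Type} (t : Token) (x : Var A),
    ¬ HasConflict env (Syn.var x : Syn Token Kind Var A) →
    InFirst env (kd t) (Syn.var x : Syn Token Kind Var A) →
    delta t (Syn.var x) = delta t (env A x)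

variable {kd env}

theorem IsDerivative.not_hasConflict_and_inSNF
    {nullOpt : ∀ {A : Type}, Syn Token Kind Var A → Option A}
    {delta : ∀ {A : Type}, Token → Syn Token Kind Var A → Syn Token Kind Var A}
    (hδ : IsDerivative kd env nullOpt delta) {A : Type} {s : Syn Token Kind Var A} {t : Token}
    (hs : ¬ HasConflict env s) (hf : InFirst env (kd t) s) :
    ¬ HasConflict env (delta t s) ∧ ∀ k, InSNF env k (delta t s) → InSNF env k s := by
  generalize hk : kd t = k at hf
  induction hf with subst hk
  | elem =>
    rw [hδ.elem t _ hs (.elem _)]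
    exact ⟨nofun, nofun⟩
  | disjL h ih =>
    rw [hδ.disj_left t _ _ hs (.disjL h) h]
    obtain ⟨ih₁, ih₂⟩ := ih (fun hc => hs (.disjL hc)) rfl
    exact ⟨ih₁, fun k hk => .disjL (ih₂ k hk)⟩
  | disjR h ih =>
    have h₁ : ¬ InFirst env (kd t) _ := fun h₁ => hs (.disjFF h₁ h)
    rw [hδ.disj_right t _ _ hs (.disjR h) h₁]
    obtain ⟨ih₁, ih₂⟩ := ih (fun hc => hs (.disjR hc)) rfl
    exact ⟨ih₁, fun k hk => .disjR (ih₂ k hk)⟩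
  | seqnL h hp ih =>
    have hs₁ : ¬ HasConflict env _ := fun hc => hs (.seqnL hc)
    have hnot : ∀ v, nullOpt _ = some v → ¬ InFirst env (kd t) _ := fun v hv h₂ =>
      hs (.seqnSF (h.inSNF_of_nullable ((hδ.nullOpt_eq_some_iff _ hs₁ v).mp hv) hs₁) h₂)
    rw [hδ.seqn_left t _ _ hs (.seqnL h hp) hnot]
    obtain ⟨ih₁, ih₂⟩ := ih hs₁ rfl
    exact ⟨not_hasConflict_seqn_of_left hs ih₁ ih₂, inSNF_seqn_of_left h.productive ih₂⟩
  | seqnR hn h ih =>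
    have hs₁ : ¬ HasConflict env _ := fun hc => hs (.seqnL hc)
    rw [hδ.seqn_right t _ _ _ hs (.seqnR hn h) ((hδ.nullOpt_eq_some_iff _ hs₁ _).mpr hn) h]
    obtain ⟨ih₁, ih₂⟩ := ih (fun hc => hs (.seqnR hc)) rfl
    exact ⟨not_hasConflict_seqn_eps ih₁, inSNF_seqn_of_eps hn.productive ih₂⟩
  | map f h ih =>
    rw [hδ.map t f _ hs (.map f h)]
    obtain ⟨ih₁, ih₂⟩ := ih (fun hc => hs (.map f hc)) rfl
    exact ⟨fun | .map _ hc => ih₁ hc, fun | k, .map _ hk => .map f (ih₂ k hk)⟩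
  | var x h ih =>
    rw [hδ.var t x hs (.var x h)]
    obtain ⟨ih₁, ih₂⟩ := ih (fun hc => hs (.var x hc)) rfl
    exact ⟨ih₁, fun k hk => .var x (ih₂ k hk)⟩

end

section

variable {Token Kind : Type} {Var : Type → Type}
variable (kd : Token → Kind) (env : ∀ A : Type, Var A → Syn Token Kind Var A)

theorem derive_preserves_ll1
    (nullOpt : ∀ {A : Type}, Syn Token Kind Var A → Option A)
    (hnull : ∀ {A : Type} (s : Syn Token Kind Var A), ¬ HasConflict env s →
      ∀ v : A, nullOpt s = some v ↔ Nullable env s v)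
    (delta : ∀ {A : Type}, Token → Syn Token Kind Var A → Syn Token Kind Var A)
    (hdelta_elem : ∀ (t : Token) (k : Kind),
      ¬ HasConflict env (Syn.elem k : Syn Token Kind Var Token) →
      InFirst env (kd t) (Syn.elem k : Syn Token Kind Var Token) →
      delta t (Syn.elem k) = Syn.eps t)
    (hdelta_disj₁ : ∀ {A : Type} (t : Token) (s₁ s₂ : Syn Token Kind Var A),
      ¬ HasConflict env (Syn.disj s₁ s₂) → InFirst env (kd t) (Syn.disj s₁ s₂) →
      InFirst env (kd t) s₁ → delta t (Syn.disj s₁ s₂) = delta t s₁)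
    (hdelta_disj₂ : ∀ {A : Type} (t : Token) (s₁ s₂ : Syn Token Kind Var A),
      ¬ HasConflict env (Syn.disj s₁ s₂) → InFirst env (kd t) (Syn.disj s₁ s₂) →
      ¬ InFirst env (kd t) s₁ → delta t (Syn.disj s₁ s₂) = delta t s₂)
    (hdelta_seqn₁ : ∀ {A B : Type} (t : Token) (s₁ : Syn Token Kind Var A)
      (s₂ : Syn Token Kind Var B) (v : A),
      ¬ HasConflict env (Syn.seqn s₁ s₂) → InFirst env (kd t) (Syn.seqn s₁ s₂) →
      nullOpt s₁ = some v → InFirst env (kd t) s₂ →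
      delta t (Syn.seqn s₁ s₂) = Syn.seqn (Syn.eps v) (delta t s₂))
    (hdelta_seqn₂ : ∀ {A B : Type} (t : Token) (s₁ : Syn Token Kind Var A)
      (s₂ : Syn Token Kind Var B),
      ¬ HasConflict env (Syn.seqn s₁ s₂) → InFirst env (kd t) (Syn.seqn s₁ s₂) →
      (∀ v : A, nullOpt s₁ = some v → ¬ InFirst env (kd t) s₂) →
      delta t (Syn.seqn s₁ s₂) = Syn.seqn (delta t s₁) s₂)
    (hdelta_map : ∀ {A B : Type} (t : Token) (f : A → B) (s : Syn Token Kind Var A),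
      ¬ HasConflict env (Syn.map f s) → InFirst env (kd t) (Syn.map f s) →
      delta t (Syn.map f s) = Syn.map f (delta t s))
    (hdelta_var : ∀ {A : Type} (t : Token) (x : Var A),
      ¬ HasConflict env (Syn.var x : Syn Token Kind Var A) →
      InFirst env (kd t) (Syn.var x : Syn Token Kind Var A) →
      delta t (Syn.var x) = delta t (env A x))
    {A : Type} (s : Syn Token Kind Var A) (t : Token)
    (hs : ¬ HasConflict env s) (hf : InFirst env (kd t) s) :
    ¬ HasConflict env (delta t s) := by
  have hδ : IsDerivative kd env nullOpt delta := ⟨hnull, hdelta_elem, hdelta_disj₁, hdelta_disj₂,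
    hdelta_seqn₁, hdelta_seqn₂, hdelta_map, hdelta_var⟩
  exact (hδ.not_hasConflict_and_inSNF hs hf).1

end
end

section
/- Plugging a value into a context preserves meaning: for every context c : Context A B, value v : A, token sequence ts and value w : B, Matches (unfocus (plug v c)) ts w if and only if Matches (unfocus (epsilon v, c)) ts w. -/
/-!
`plug` only rewrites the focus up to semantic equivalence: an `apply f` layer turns `ε v` into
`ε (f v)`, which matches exactly what `map f (ε v)` matches, and a `prepend v'` layer turns it
into `ε (v', v)`, equivalent to `seqn (ε v') (ε v)`; at a `followBy` layer nothing changes.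
Since `unfocus` wraps the focus in `map`s and `seqn`s, it preserves semantic equivalence.
-/

set_option autoImplicit false

section

variable {Token Kind : Type} {Var : Type → Type}
variable (kd : Token → Kind) (env : ∀ A : Type, Var A → Syn Token Kind Var A)

/-- Inverting `Matches` by recursion on the syntax rather than by `cases` on a derivation:
`cases` cannot invert `seqn`, as that needs unifying `A × B` with another product type and
type formers are not injective. -/
def MatchesUnfold : ∀ {T : Type}, Syn Token Kind Var T → List Token → T → Prop
  | _, Syn.elem k, ts, t => ts = [t] ∧ kd t = k
  | _, Syn.fail, _, _ => False
  | _, Syn.eps v, ts, w => ts = [] ∧ w = v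
  | _, Syn.disj s₁ s₂, ts, w => Matches kd env s₁ ts w ∨ Matches kd env s₂ ts w
  | _, Syn.seqn s₁ s₂, ts, w =>
      ∃ ts₁ ts₂, ts = ts₁ ++ ts₂ ∧ Matches kd env s₁ ts₁ w.1 ∧ Matches kd env s₂ ts₂ w.2
  | _, Syn.map f s, ts, w => ∃ v, Matches kd env s ts v ∧ f v = w
  | _, Syn.var x, ts, w => Matches kd env (env _ x) ts w

theorem matches_iff_matchesUnfold {T : Type} (s : Syn Token Kind Var T) (ts : List Token)
    (w : T) : Matches kd env s ts w ↔ MatchesUnfold kd env s ts w := by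
  constructor
  · intro h
    cases h with
    | elem hk => exact ⟨rfl, hk⟩
    | eps => exact ⟨rfl, rfl⟩
    | disjL h => exact Or.inl h
    | disjR h => exact Or.inr h
    | seqn h₁ h₂ => exact ⟨_, _, rfl, h₁, h₂⟩
    | map f h => exact ⟨_, h, rfl⟩
    | var x h => exact h
  · cases s with
    | elem k => rintro ⟨rfl, hk⟩; exact Matches.elem hk
    | fail => exact False.elim
    | eps => rintro ⟨rfl, rfl⟩; exact Matches.eps _
    | disj s₁ s₂ => rintro (h | h); exacts [Matches.disjL h, Matches.disjR h]
    | seqn s₁ s₂ => rintro ⟨ts₁, ts₂, rfl, h₁, h₂⟩; exact Matches.seqn h₁ h₂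
    | map f s => rintro ⟨v, h, rfl⟩; exact Matches.map f h
    | var x => exact Matches.var x

theorem matches_eps_iff {A : Type} (v : A) (ts : List Token) (w : A) :
    Matches kd env (Syn.eps v) ts w ↔ ts = [] ∧ w = v :=
  matches_iff_matchesUnfold kd env _ ts w

theorem matches_seqn_iff {A B : Type} (s₁ : Syn Token Kind Var A) (s₂ : Syn Token Kind Var B)
    (ts : List Token) (w : A × B) :
    Matches kd env (Syn.seqn s₁ s₂) ts w ↔
      ∃ ts₁ ts₂, ts = ts₁ ++ ts₂ ∧ Matches kd env s₁ ts₁ w.1 ∧ Matches kd env s₂ ts₂ w.2 :=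
  matches_iff_matchesUnfold kd env _ ts w

theorem matches_map_iff {A B : Type} (f : A → B) (s : Syn Token Kind Var A) (ts : List Token)
    (w : B) : Matches kd env (Syn.map f s) ts w ↔ ∃ v, Matches kd env s ts v ∧ f v = w :=
  matches_iff_matchesUnfold kd env _ ts w

theorem matches_map_eps_iff {A B : Type} (f : A → B) (v : A) (ts : List Token) (w : B) :
    Matches kd env (Syn.map f (Syn.eps v)) ts w ↔ Matches kd env (Syn.eps (f v)) ts w := by
  simp only [matches_map_iff, matches_eps_iff]
  constructor
  · rintro ⟨_, ⟨rfl, rfl⟩, rfl⟩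
    exact ⟨rfl, rfl⟩
  · rintro ⟨rfl, rfl⟩
    exact ⟨v, ⟨rfl, rfl⟩, rfl⟩

theorem matches_seqn_eps_eps_iff {A C : Type} (v' : C) (v : A) (ts : List Token) (w : C × A) :
    Matches kd env (Syn.seqn (Syn.eps v') (Syn.eps v)) ts w ↔
      Matches kd env (Syn.eps (v', v)) ts w := by
  simp only [matches_seqn_iff, matches_eps_iff, Prod.ext_iff]
  constructor
  · rintro ⟨_, _, rfl, ⟨rfl, h₁⟩, rfl, h₂⟩
    exact ⟨rfl, h₁, h₂⟩
  · rintro ⟨rfl, h⟩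
    exact ⟨[], [], rfl, ⟨rfl, h.1⟩, rfl, h.2⟩

theorem matches_unfocus_congr {A B : Type} (c : Ctx Token Kind Var A B)
    {s₁ s₂ : Syn Token Kind Var A} (h : ∀ ts v, Matches kd env s₁ ts v ↔ Matches kd env s₂ ts v)
    (ts : List Token) (w : B) :
    Matches kd env (unfocus s₁ c) ts w ↔ Matches kd env (unfocus s₂ c) ts w := by
  induction c with
  | nil => exact h ts w
  | cons l c ih =>
    cases l with
    | apply f => exact ih (fun ts w => by simp only [matches_map_iff, h]) w
    | prepend v => exact ih (fun ts w => by simp only [matches_seqn_iff, h]) w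
    | followBy s => exact ih (fun ts w => by simp only [matches_seqn_iff, h]) w

theorem plug_correct
    {A B : Type} (c : Ctx Token Kind Var A B) (v : A) (ts : List Token) (w : B) :
    Matches kd env (unfocusF (plug v c)) ts w ↔
      Matches kd env (unfocus (Syn.eps v) c) ts w := by
  induction c with
  | nil => exact Iff.rfl
  | cons l c ih =>
    cases l with
    | apply f =>
      exact (ih (f v) w).trans <|
        matches_unfocus_congr kd env c (fun _ _ => (matches_map_eps_iff kd env f v _ _).symm) ts w
    | prepend v' =>
      exact (ih (v', v) w).trans <|
        matches_unfocus_congr kd env c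
          (fun _ _ => (matches_seqn_eps_eps_iff kd env v' v _ _).symm) ts w
    | followBy s => exact Iff.rfl

end
end
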